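/- Let d ≥ 2 and let G_1 : [n_1]×[r_1] → ℝ, G_k : [r_{k−1}]×[n_k]×[r_k] → ℝ for k = 2,…,d−1, and G_d : [r_{d−1}]×[n_d] → ℝ, with perturbations ΔG_k satisfying |||ΔG_k||| ≤ δ_k·|||G_k||| for all k. Let ε ∈ (0,1). If δ := max_{1 ≤ k ≤ d} δ_k ≤ ε/(3d), then ‖(G_1+ΔG_1)∘⋯∘(G_d+ΔG_d) − G_1∘⋯∘G_d‖_∞ / (|||G_1|||⋯|||G_d|||) ≤ ε. -/

import Mathlib

open scoped BigOperators
open Matrix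

/-- Indices `(x_0, …, x_{k-1})` of the first `k` variables (sizes given by `n`). -/
abbrev PreIdx (n : ℕ → ℕ) (k : ℕ) := ∀ i : Fin k, Fin (n i)

/-- Indices `(x_k, …, x_{d-1})` of the variables with position `≥ k`. -/
abbrev SufIdx (n : ℕ → ℕ) (d k : ℕ) := ∀ i : {i : Fin d // k ≤ (i : ℕ)}, Fin (n i)

/-- Indices of the variables with position in the window `[a, b)`. -/
abbrev MidIdx (n : ℕ → ℕ) (d a b : ℕ) :=
  ∀ i : {i : Fin d // a ≤ (i : ℕ) ∧ (i : ℕ) < b}, Fin (n i)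

/-- Glue a prefix index and a suffix index into a full index. -/
def glue {n : ℕ → ℕ} {d k : ℕ} (x : PreIdx n k) (y : SufIdx n d k) : PreIdx n d :=
  fun i => if h : (i : ℕ) < k then x ⟨i, h⟩ else y ⟨i, Nat.le_of_not_lt h⟩

/-- The `k`-th unfolding matrix of a `d`-dimensional tensor `p`. -/
def unfold {n : ℕ → ℕ} {d : ℕ} (p : PreIdx n d → ℝ) (k : ℕ) :
    Matrix (PreIdx n k) (SufIdx n d k) ℝ :=
  Matrix.of fun x y => p (glue x y)

/-- Column space of a matrix: span of its columns. -/
noncomputable def colSpace {R C : Type*} (M : Matrix R C ℝ) : Submodule ℝ (R → ℝ) :=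
  Submodule.span ℝ (Set.range fun c => fun r => M r c)

/-- Row space of a matrix: span of its rows. -/
noncomputable def rowSpace {R C : Type*} (M : Matrix R C ℝ) : Submodule ℝ (C → ℝ) :=
  Submodule.span ℝ (Set.range fun r => fun c => M r c)

/-- Rank of a matrix (dimension of its column space). -/
noncomputable def mrank {R C : Type*} (M : Matrix R C ℝ) : ℕ :=
  Module.finrank ℝ ↥(colSpace M)

/-- Restriction of a prefix index to the first `k` variables. -/
def takePre {n : ℕ → ℕ} {k : ℕ} (x : PreIdx n (k + 1)) : PreIdx n k :=
  fun i => x ⟨i, Nat.lt_succ_of_lt i.isLt⟩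

/-- Extend a prefix index by one more variable. -/
def snoc' {n : ℕ → ℕ} {k : ℕ} (z : PreIdx n k) (a : Fin (n k)) : PreIdx n (k + 1) :=
  fun i =>
    if h : (i : ℕ) < k then z ⟨i, h⟩
    else Fin.cast (congrArg n (by have := i.isLt; omega : k = (i : ℕ))) a

/-- A family of tensor-train cores: core `k` has shape `r k × n k × r (k+1)`.
(The first and last cores carry a dummy index of size `r 0 = 1`, `r d = 1`.) -/
abbrev CoreType (n r : ℕ → ℕ) (d : ℕ) :=
  ∀ k : Fin d, Fin (r k) → Fin (n k) → Fin (r ((k : ℕ) + 1)) → ℝ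

/-- Partial contraction of the first `k` cores. -/
noncomputable def ttPrefixF {d : ℕ} {n r : ℕ → ℕ} (G : CoreType n r d) :
    (k : ℕ) → k ≤ d → PreIdx n k → Fin (r 0) → Fin (r k) → ℝ
  | 0, _, _, a, b => if (a : ℕ) = (b : ℕ) then 1 else 0
  | k + 1, h, x, a, b =>
      ∑ c : Fin (r k),
        ttPrefixF G k (Nat.le_of_succ_le h) (takePre x) a c * G ⟨k, h⟩ c (x (Fin.last k)) b

/-- Full contraction `G_1 ∘ ⋯ ∘ G_d` of a family of tensor-train cores. -/
noncomputable def ttContract {d : ℕ} {n r : ℕ → ℕ} (G : CoreType n r d)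
    (x : PreIdx n d) : ℝ :=
  ∑ a : Fin (r 0), ∑ b : Fin (r d), ttPrefixF G d le_rfl x a b

/-- The recursively contracted left sketch functions `S_k` built from blocks `s_k`. -/
noncomputable def leftSketch {n m : ℕ → ℕ}
    (s : ∀ k : ℕ, Fin (m (k + 1)) → Fin (n k) → Fin (m k) → ℝ) :
    (k : ℕ) → Fin (m k) → PreIdx n k → ℝ
  | 0, _, _ => 1
  | k + 1, β, x => ∑ c : Fin (m k), s k β (x (Fin.last k)) c * leftSketch s k c (takePre x)

/-- The right-sketched unfolding `Φ̄_k = p ∘ T_{k+1}`. -/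
noncomputable def rightSketched {n : ℕ → ℕ} {d : ℕ} (p : PreIdx n d → ℝ)
    {ℓ : ℕ → ℕ} (T : ∀ k : ℕ, SufIdx n d k → Fin (ℓ k) → ℝ) (k : ℕ)
    (x : PreIdx n k) (γ : Fin (ℓ k)) : ℝ :=
  ∑ y : SufIdx n d k, p (glue x y) * T k y γ

/-- The doubly sketched tensor `Φ̃_{j+1} = S_j ∘ Φ̄_{j+1}`. -/
noncomputable def tildePhi {n : ℕ → ℕ} {d : ℕ} {ℓ m : ℕ → ℕ} (p : PreIdx n d → ℝ)
    (T : ∀ k : ℕ, SufIdx n d k → Fin (ℓ k) → ℝ)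
    (s : ∀ k : ℕ, Fin (m (k + 1)) → Fin (n k) → Fin (m k) → ℝ)
    (j : ℕ) (β : Fin (m j)) (xj : Fin (n j)) (γ : Fin (ℓ (j + 1))) : ℝ :=
  ∑ z : PreIdx n j, leftSketch s j β z * rightSketched p T (j + 1) (snoc' z xj) γ

/-- Marginal of `p` on the window of variables `[a, b)`. -/
noncomputable def winMarg {n : ℕ → ℕ} {d : ℕ} (p : PreIdx n d → ℝ) (a b : ℕ)
    (y : MidIdx n d a b) : ℝ :=
  ∑ z : ∀ i : {i : Fin d // (i : ℕ) < a ∨ b ≤ (i : ℕ)}, Fin (n i),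
    p fun i =>
      if h : a ≤ (i : ℕ) ∧ (i : ℕ) < b then y ⟨i, h⟩ else z ⟨i, by omega⟩

/-- Marginal of `p` on the window `[a, b)`, viewed as a matrix with rows indexed by
variables in `[a, c)` and columns by variables in `[c, b)`. -/
noncomputable def winMatrix {n : ℕ → ℕ} {d : ℕ} (p : PreIdx n d → ℝ) (a c b : ℕ) :
    Matrix (MidIdx n d a c) (MidIdx n d c b) ℝ :=
  Matrix.of fun x y =>
    ∑ z : ∀ i : {i : Fin d // (i : ℕ) < a ∨ b ≤ (i : ℕ)}, Fin (n i),
      p fun i =>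
        if h1 : a ≤ (i : ℕ) ∧ (i : ℕ) < c then x ⟨i, h1⟩
        else if h2 : c ≤ (i : ℕ) ∧ (i : ℕ) < b then y ⟨i, h2⟩
        else z ⟨i, by omega⟩

/-- A (first-order) discrete Markov model: a probability density such that for all
`2 ≤ k ≤ d - 1` (1-based), `p(x) · p_k(x_k) = p_{1:k}(x_{1:k}) · p_{k:d}(x_{k:d})`. -/
def IsMarkov {n : ℕ → ℕ} {d : ℕ} (p : PreIdx n d → ℝ) : Prop :=
  (∀ x, 0 ≤ p x) ∧ (∑ x : PreIdx n d, p x) = 1 ∧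
    ∀ k : ℕ, 2 ≤ k → k ≤ d - 1 → ∀ x : PreIdx n d,
      p x * winMarg p (k - 1) k (fun i => x i.1) =
        winMarg p 0 k (fun i => x i.1) * winMarg p (k - 1) d (fun i => x i.1)

/-- An order-`m` discrete Markov model. -/
def IsMarkovOrder {n : ℕ → ℕ} {d : ℕ} (m : ℕ) (p : PreIdx n d → ℝ) : Prop :=
  (∀ x, 0 ≤ p x) ∧ (∑ x : PreIdx n d, p x) = 1 ∧
    ∀ k : ℕ, m + 1 ≤ k → k ≤ d - 1 → ∀ x : PreIdx n d,
      p x * winMarg p (k - m) k (fun i => x i.1) =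
        winMarg p 0 k (fun i => x i.1) * winMarg p (k - m) d (fun i => x i.1)

/-- Spectral norm (ℓ² → ℓ² operator norm) of a matrix. -/
noncomputable def specNorm {R C : Type*} [Fintype R] [Fintype C] [DecidableEq C]
    (M : Matrix R C ℝ) : ℝ :=
  ‖LinearMap.toContinuousLinearMap (Matrix.toEuclideanLin M)‖

/-- Moore–Penrose pseudoinverse of a full-column-rank matrix, `A⁺ = (AᵀA)⁻¹Aᵀ`. -/
noncomputable def pinv {m n : ℕ} (A : Matrix (Fin m) (Fin n) ℝ) :
    Matrix (Fin n) (Fin m) ℝ :=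
  (Aᵀ * A)⁻¹ * Aᵀ

/-- The norm `|||G|||`: max over the middle index of the spectral norm of the slices. -/
noncomputable def tnorm {a b c : ℕ} (G : Fin a → Fin b → Fin c → ℝ) : ℝ :=
  ⨆ i : Fin b, specNorm (Matrix.of fun x y => G x i y)

/-- Supremum norm of a 3-tensor. -/
noncomputable def supNorm3 {a b c : ℕ} (G : Fin a → Fin b → Fin c → ℝ) : ℝ :=
  ⨆ q : Fin a × Fin b × Fin c, |G q.1 q.2.1 q.2.2|

/-- Supremum norm of a `d`-dimensional tensor. -/
noncomputable def supNormF {n : ℕ → ℕ} {d : ℕ} (f : PreIdx n d → ℝ) : ℝ :=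
  ⨆ x : PreIdx n d, |f x|

/-! The prefix contractions are matrix products `P_{k+1}(x) = P_k(x) · G_{k+1}(·, x_{k+1}, ·)`.
Writing `QT - PS = (Q - P) T + P (T - S)` and using submultiplicativity of the spectral norm,
induction on `k` gives `‖P_k(x; G + ΔG) - P_k(x; G)‖ ≤ (∏ (1 + δ_i) - 1) ∏ |||G_i|||`. With
`r_0 = r_d = 1` the entry of the full contraction is bounded by this spectral norm, and
`(1 + ε/(3d))^d ≤ exp(ε/3) ≤ 1/(1 - ε/3) ≤ 1 + ε`. -/

open scoped Matrix.Norms.L2Operator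

theorem Matrix.l2_opNorm_mul_sub_mul_le {𝕜 : Type*} [RCLike 𝕜] {l m p : Type*} [Fintype l]
    [Fintype m] [Fintype p] [DecidableEq m] [DecidableEq p] (P Q : Matrix l m 𝕜)
    (S T : Matrix m p 𝕜) : ‖Q * T - P * S‖ ≤ ‖Q - P‖ * ‖T‖ + ‖P‖ * ‖T - S‖ :=
  calc ‖Q * T - P * S‖ = ‖(Q - P) * T + P * (T - S)‖ := by
        rw [Matrix.sub_mul, Matrix.mul_sub]; abel_nf
    _ ≤ ‖Q - P‖ * ‖T‖ + ‖P‖ * ‖T - S‖ :=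
        (norm_add_le _ _).trans (add_le_add (l2_opNorm_mul _ _) (l2_opNorm_mul _ _))

theorem Matrix.l2_opNorm_one_le {𝕜 : Type*} [RCLike 𝕜] {m : Type*} [Fintype m]
    [DecidableEq m] :
    ‖(1 : Matrix m m 𝕜)‖ ≤ 1 := by
  rw [← Matrix.diagonal_one, l2_opNorm_diagonal, pi_norm_le_iff_of_nonneg zero_le_one]
  simp

theorem Matrix.abs_apply_le_l2_opNorm {m p : Type*} [Fintype m] [Fintype p] [DecidableEq p]
    (M : Matrix m p ℝ) (a : m) (b : p) : |M a b| ≤ ‖M‖ := by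
  set v := EuclideanSpace.single b (1 : ℝ)
  have hcol : (EuclideanSpace.equiv m ℝ).symm (M *ᵥ v) a = M a b := by simp [v]
  calc |M a b| = ‖(EuclideanSpace.equiv m ℝ).symm (M *ᵥ v) a‖ := by
        rw [Real.norm_eq_abs, hcol]
    _ ≤ ‖(EuclideanSpace.equiv m ℝ).symm (M *ᵥ v)‖ := PiLp.norm_apply_le _ a
    _ ≤ ‖M‖ * ‖v‖ := M.l2_opNorm_mulVec v
    _ = ‖M‖ := by rw [PiLp.norm_single, norm_one, mul_one]

theorem one_add_div_pow_le (d : ℕ) {ε : ℝ} (h0 : 0 ≤ ε) (h2 : ε ≤ 2) :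
    (1 + ε / (3 * d)) ^ d ≤ 1 + ε := by
  rcases Nat.eq_zero_or_pos d with rfl | hd
  · simpa using h0
  have hdc : d * (ε / (3 * d)) = ε / 3 := by field_simp
  calc (1 + ε / (3 * d)) ^ d ≤ Real.exp (ε / (3 * d)) ^ d := by
        gcongr
        linarith [Real.add_one_le_exp (ε / (3 * d))]
    _ = Real.exp (ε / 3) := by rw [← Real.exp_nat_mul, hdc]
    _ ≤ 1 / (1 - ε / 3) := Real.exp_bound_div_one_sub_of_interval (by positivity) (by linarith)
    _ ≤ 1 + ε := by
        rw [div_le_iff₀ (by linarith)]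
        nlinarith

def coreSlice {a b c : ℕ} (G : Fin a → Fin b → Fin c → ℝ) (i : Fin b) :
    Matrix (Fin a) (Fin c) ℝ :=
  Matrix.of fun x y => G x i y

theorem coreSlice_add {a b c : ℕ} (G ΔG : Fin a → Fin b → Fin c → ℝ) (i : Fin b) :
    coreSlice (G + ΔG) i = coreSlice G i + coreSlice ΔG i := rfl

theorem tnorm_nonneg {a b c : ℕ} (G : Fin a → Fin b → Fin c → ℝ) : 0 ≤ tnorm G :=
  Real.iSup_nonneg fun _ => norm_nonneg _

theorem norm_coreSlice_le_tnorm {a b c : ℕ} (G : Fin a → Fin b → Fin c → ℝ) (i : Fin b) :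
    ‖coreSlice G i‖ ≤ tnorm G :=
  le_ciSup (f := fun i => specNorm (coreSlice G i)) (Set.finite_range _).bddAbove i

section Prefix

variable {d : ℕ} {n r : ℕ → ℕ}

noncomputable def ttPrefixMatrix (G : CoreType n r d) (k : ℕ) (hk : k ≤ d) (x : PreIdx n k) :
    Matrix (Fin (r 0)) (Fin (r k)) ℝ :=
  Matrix.of (ttPrefixF G k hk x)

theorem ttPrefixMatrix_zero (G : CoreType n r d) (hk : 0 ≤ d) (x : PreIdx n 0) :
    ttPrefixMatrix G 0 hk x = 1 := by
  ext a b
  simp [ttPrefixMatrix, ttPrefixF, Matrix.one_apply, Fin.val_eq_val]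

theorem ttPrefixMatrix_succ (G : CoreType n r d) (k : ℕ) (hk : k + 1 ≤ d)
    (x : PreIdx n (k + 1)) :
    ttPrefixMatrix G (k + 1) hk x =
      ttPrefixMatrix G k (Nat.le_of_succ_le hk) (takePre x) *
        coreSlice (G ⟨k, hk⟩) (x (Fin.last k)) := by
  ext a b
  rfl

theorem norm_ttPrefixMatrix_le (G : CoreType n r d) (k : ℕ) (hk : k ≤ d) (x : PreIdx n k) :
    ‖ttPrefixMatrix G k hk x‖ ≤ ∏ i : Fin k, tnorm (G (Fin.castLE hk i)) := by
  induction k with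
  | zero => simpa [ttPrefixMatrix_zero] using Matrix.l2_opNorm_one_le (𝕜 := ℝ)
  | succ k ih =>
    rw [ttPrefixMatrix_succ, Fin.prod_univ_castSucc]
    exact (Matrix.l2_opNorm_mul _ _).trans <| mul_le_mul (ih _ _) (norm_coreSlice_le_tnorm _ _)
      (norm_nonneg _) (Finset.prod_nonneg fun _ _ => tnorm_nonneg _)

theorem norm_ttPrefixMatrix_add_sub_le (G ΔG : CoreType n r d) (δ : Fin d → ℝ)
    (hpert : ∀ k, tnorm (ΔG k) ≤ δ k * tnorm (G k)) (k : ℕ) (hk : k ≤ d) (x : PreIdx n k) :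
    ‖ttPrefixMatrix (fun k => G k + ΔG k) k hk x - ttPrefixMatrix G k hk x‖ ≤
      (∏ i : Fin k, (1 + δ (Fin.castLE hk i)) - 1) *
        ∏ i : Fin k, tnorm (G (Fin.castLE hk i)) := by
  induction k with
  | zero => simp [ttPrefixMatrix_zero]
  | succ k ih =>
    set j : Fin d := ⟨k, hk⟩
    set xk := x (Fin.last k)
    have hslice : ‖coreSlice (ΔG j) xk‖ ≤ δ j * tnorm (G j) :=
      (norm_coreSlice_le_tnorm _ _).trans (hpert j)
    have hsum : ‖coreSlice (G j + ΔG j) xk‖ ≤ (1 + δ j) * tnorm (G j) := by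
      rw [coreSlice_add]
      linarith [norm_add_le (coreSlice (G j) xk) (coreSlice (ΔG j) xk),
        norm_coreSlice_le_tnorm (G j) xk]
    have ihx := ih (Nat.le_of_succ_le hk) (takePre x)
    have hP := norm_ttPrefixMatrix_le G k (Nat.le_of_succ_le hk) (takePre x)
    have hlast : Fin.castLE hk (Fin.last k) = j := rfl
    have hGlast : tnorm (G (Fin.castLE hk (Fin.last k))) = tnorm (G j) := rfl
    rw [ttPrefixMatrix_succ, ttPrefixMatrix_succ, Fin.prod_univ_castSucc, Fin.prod_univ_castSucc]
    simp only [Fin.castLE_castSucc, hlast, hGlast]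
    refine (Matrix.l2_opNorm_mul_sub_mul_le _ _ _ _).trans ?_
    rw [coreSlice_add, add_sub_cancel_left]
    calc _ ≤ _ * ((1 + δ j) * tnorm (G j)) + (∏ i : Fin k, tnorm (G (Fin.castLE _ i))) *
            (δ j * tnorm (G j)) :=
          add_le_add (mul_le_mul_of_nonneg_left hsum (norm_nonneg _) |>.trans <|
              mul_le_mul_of_nonneg_right ihx <| (norm_nonneg _).trans hsum)
            (mul_le_mul hP hslice (norm_nonneg _) (Finset.prod_nonneg fun _ _ => tnorm_nonneg _))
      _ = _ := by ring

theorem abs_ttContract_sub_le (hr0 : r 0 = 1) (hrd : r d = 1) (G H : CoreType n r d)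
    (x : PreIdx n d) :
    |ttContract H x - ttContract G x| ≤
      ‖ttPrefixMatrix H d le_rfl x - ttPrefixMatrix G d le_rfl x‖ := by
  set D := ttPrefixMatrix H d le_rfl x - ttPrefixMatrix G d le_rfl x
  have hD : ttContract H x - ttContract G x = ∑ a, ∑ b, D a b := by
    simp [D, ttContract, ttPrefixMatrix, Finset.sum_sub_distrib]
  calc |ttContract H x - ttContract G x| ≤ ∑ a, ∑ b, |D a b| := by
        rw [hD]
        exact (Finset.abs_sum_le_sum_abs _ _).trans
          (Finset.sum_le_sum fun a _ => Finset.abs_sum_le_sum_abs _ _)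
    _ ≤ ∑ _a : Fin (r 0), ∑ _b : Fin (r d), ‖D‖ :=
        Finset.sum_le_sum fun a _ => Finset.sum_le_sum fun b _ => D.abs_apply_le_l2_opNorm a b
    _ = ‖D‖ := by simp [hr0, hrd]

end Prefix

/-- Corollary: relative perturbation bound for the contraction.
If `|||ΔG_k||| ≤ δ_k |||G_k|||` for all `k` with `δ_k > 0`, `ε ∈ (0,1)`, and every
`δ_k ≤ ε / (3d)` (i.e. `max_k δ_k ≤ ε/(3d)`), then
`‖(G_1+ΔG_1)∘⋯∘(G_d+ΔG_d) − G_1∘⋯∘G_d‖_∞ / (|||G_1|||⋯|||G_d|||) ≤ ε`.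
(Here `d = d₀ + 2 ≥ 2`, with dummy boundary ranks `r 0 = r d = 1`.) -/
theorem contraction_relative_perturbation_bound
    (d₀ : ℕ) (n r : ℕ → ℕ) (hr0 : r 0 = 1) (hrd : r (d₀ + 2) = 1)
    (G ΔG : CoreType n r (d₀ + 2)) (δ : Fin (d₀ + 2) → ℝ)
    (hδpos : ∀ k, 0 < δ k)
    (hpert : ∀ k, tnorm (ΔG k) ≤ δ k * tnorm (G k))
    (ε : ℝ) (hε0 : 0 < ε) (hε1 : ε < 1)
    (hδε : ∀ k, δ k ≤ ε / (3 * ((d₀ : ℝ) + 2))) :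
    supNormF (fun x => ttContract (fun k => G k + ΔG k) x - ttContract G x) /
        (∏ k, tnorm (G k)) ≤ ε := by
  have hnorm : 0 ≤ ∏ k, tnorm (G k) := Finset.prod_nonneg fun k _ => tnorm_nonneg _
  have hgrowth : ∏ k, (1 + δ k) - 1 ≤ ε := by
    have hprod : ∏ k, (1 + δ k) ≤ ∏ _k : Fin (d₀ + 2), (1 + ε / (3 * ((d₀ : ℝ) + 2))) :=
      Finset.prod_le_prod (fun k _ => by linarith [hδpos k]) fun k _ => by linarith [hδε k]
    have hpow := one_add_div_pow_le (d₀ + 2) hε0.le (by linarith)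
    rw [Finset.prod_const, Finset.card_univ, Fintype.card_fin] at hprod
    push_cast at hpow
    linarith
  have hentry : ∀ x, |ttContract (fun k => G k + ΔG k) x - ttContract G x| ≤
      ε * ∏ k, tnorm (G k) := fun x =>
    calc _ ≤ _ := abs_ttContract_sub_le hr0 hrd G _ x
      _ ≤ (∏ k, (1 + δ k) - 1) * ∏ k, tnorm (G k) := by
          simpa using norm_ttPrefixMatrix_add_sub_le G ΔG δ hpert _ le_rfl x
      _ ≤ ε * ∏ k, tnorm (G k) := mul_le_mul_of_nonneg_right hgrowth hnorm
  exact div_le_of_le_mul₀ hnorm hε0.le (Real.iSup_le hentry (by positivity))
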